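/- There exists a primitive embedding ι of the lattice A₂ (ℤ² with Gram matrix [[−2,1],[1,−2]]) into the lattice E₈ such that the orthogonal complement of ι(ℤ²) in E₈, equipped with the restricted bilinear form, is isometric to the lattice E₆. -/

import Mathlib

open Matrix

/-- The hyperbolic lattice `U`. -/
def U : Matrix (Fin 2) (Fin 2) ℤ := !![0, 1; 1, 0]

/-- The root lattice `A₁` (negative definite). -/
def A1 : Matrix (Fin 1) (Fin 1) ℤ := !![-2]

/-- The root lattice `A₂` (negative definite). -/
def A2 : Matrix (Fin 2) (Fin 2) ℤ := !![-2, 1; 1, -2]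

/-- The root lattice `A₆` (negative definite). -/
def A6 : Matrix (Fin 6) (Fin 6) ℤ :=
  !![-2, 1, 0, 0, 0, 0;
    1, -2, 1, 0, 0, 0;
    0, 1, -2, 1, 0, 0;
    0, 0, 1, -2, 1, 0;
    0, 0, 0, 1, -2, 1;
    0, 0, 0, 0, 1, -2]

/-- The lattice `C₈⁶` of Nishiyama's lemma. -/
def C86 : Matrix (Fin 2) (Fin 2) ℤ := !![-4, 1; 1, -2]

/-- The root lattice `E₈` (negative of the Cartan matrix, Bourbaki numbering). -/
def E8 : Matrix (Fin 8) (Fin 8) ℤ :=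
  !![-2, 0, 1, 0, 0, 0, 0, 0;
    0, -2, 0, 1, 0, 0, 0, 0;
    1, 0, -2, 1, 0, 0, 0, 0;
    0, 1, 1, -2, 1, 0, 0, 0;
    0, 0, 0, 1, -2, 1, 0, 0;
    0, 0, 0, 0, 1, -2, 1, 0;
    0, 0, 0, 0, 0, 1, -2, 1;
    0, 0, 0, 0, 0, 0, 1, -2]

/-- The root lattice `E₇` (nodes 1–7 of `E₈` in Bourbaki numbering). -/
def E7 : Matrix (Fin 7) (Fin 7) ℤ :=
  !![-2, 0, 1, 0, 0, 0, 0;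
    0, -2, 0, 1, 0, 0, 0;
    1, 0, -2, 1, 0, 0, 0;
    0, 1, 1, -2, 1, 0, 0;
    0, 0, 0, 1, -2, 1, 0;
    0, 0, 0, 0, 1, -2, 1;
    0, 0, 0, 0, 0, 1, -2]

/-- The root lattice `E₆` (nodes 1–6 of `E₈` in Bourbaki numbering). -/
def E6 : Matrix (Fin 6) (Fin 6) ℤ :=
  !![-2, 0, 1, 0, 0, 0;
    0, -2, 0, 1, 0, 0;
    1, 0, -2, 1, 0, 0;
    0, 1, 1, -2, 1, 0;
    0, 0, 0, 1, -2, 1;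
    0, 0, 0, 0, 1, -2]

/-- Block-diagonal (direct) sum of two Gram matrices. -/
def dsum {m n : ℕ} (A : Matrix (Fin m) (Fin m) ℤ) (B : Matrix (Fin n) (Fin n) ℤ) :
    Matrix (Fin (m + n)) (Fin (m + n)) ℤ :=
  Matrix.reindex finSumFinEquiv finSumFinEquiv (Matrix.fromBlocks A 0 0 B)

/-- The K3 lattice `Λ_K3 = U ⊕ U ⊕ U ⊕ E₈ ⊕ E₈`. -/
def LambdaK3 : Matrix (Fin 22) (Fin 22) ℤ := dsum (dsum (dsum (dsum U U) U) E8) E8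

/-!
The highest root `θ = 2α₁ + 3α₂ + 4α₃ + 6α₄ + 5α₅ + 4α₆ + 3α₇ + 2α₈` of `E₈` is orthogonal to
`α₁, …, α₇` and `(−θ, α₈) = 1`, so `α₈` and `−θ` span a copy of `A₂` orthogonal to
`E₆ = ⟨α₁, …, α₆⟩`. The pairings of `v = ∑ vᵢ αᵢ` with `α₈` and `−θ` are `v₇ − 2v₈` and `v₈`,
so the orthogonal complement is exactly `E₆`.
Both embeddings have integral left inverses, which gives injectivity and primitivity.
-/

namespace Matrix

variable {R : Type*} [CommRing R] {m n p : Type*} [Fintype m] [Fintype n] [Fintype p]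

theorem mulVec_injective_of_mul_eq_one [DecidableEq n] {M : Matrix m n R} {L : Matrix n m R}
    (h : L * M = 1) : Function.Injective M.mulVec := fun x y hxy => by
  simpa only [mulVec_mulVec, h, one_mulVec] using congrArg L.mulVec hxy

theorem mem_range_mulVecLin_of_smul_mem [NoZeroDivisors R] [DecidableEq n] {M : Matrix m n R}
    {L : Matrix n m R} (h : L * M = 1) {v : m → R} {k : R} (hk : k ≠ 0)
    (hkv : k • v ∈ LinearMap.range M.mulVecLin) : v ∈ LinearMap.range M.mulVecLin := by
  obtain ⟨x, hx⟩ := hkv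
  rw [mulVecLin_apply] at hx
  refine ⟨L *ᵥ v, ?_⟩
  have : k • (M *ᵥ (L *ᵥ v) - v) = 0 := by
    rw [smul_sub, ← mulVec_smul, ← mulVec_smul, ← hx, mulVec_mulVec, mulVec_mulVec, Matrix.mul_assoc, h,
      Matrix.mul_one, sub_self]
  exact sub_eq_zero.mp ((smul_eq_zero.mp this).resolve_left hk)

theorem mulVec_dotProduct_mulVec_mulVec (A : Matrix m n R) (G : Matrix m m R)
    (B : Matrix m p R) (x : n → R) (y : p → R) :
    (A *ᵥ x) ⬝ᵥ (G *ᵥ (B *ᵥ y)) = x ⬝ᵥ ((Aᵀ * G * B) *ᵥ y) := by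
  rw [mulVec_mulVec, dotProduct_mulVec, vecMul_mulVec, ← dotProduct_mulVec, Matrix.mul_assoc]

theorem forall_dotProduct_mulVec_mulVec_eq_zero_iff (G : Matrix m m R)
    (M : Matrix m n R) (v : m → R) :
    (∀ x, v ⬝ᵥ (G *ᵥ (M *ᵥ x)) = 0) ↔ (G * M)ᵀ *ᵥ v = 0 := by
  have hpair (x : n → R) : v ⬝ᵥ (G *ᵥ (M *ᵥ x)) = ((G * M)ᵀ *ᵥ v) ⬝ᵥ x := by
    rw [mulVec_mulVec, dotProduct_mulVec, ← vecMul_transpose, transpose_transpose]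
  simp only [hpair]
  exact dotProduct_eq_zero_iff

theorem mem_range_mulVecLin_iff_mulVec_eq_zero [DecidableEq m] {N : Matrix m p R}
    {L : Matrix p m R} {K : Matrix n m R} {P : Matrix m n R} (hKN : K * N = 0)
    (hsplit : N * L + P * K = 1) (v : m → R) :
    v ∈ LinearMap.range N.mulVecLin ↔ K *ᵥ v = 0 := by
  constructor
  · rintro ⟨y, rfl⟩
    rw [mulVecLin_apply, mulVec_mulVec, hKN, zero_mulVec]
  · intro hv
    refine ⟨L *ᵥ v, ?_⟩
    calc N *ᵥ (L *ᵥ v) = (N * L + P * K) *ᵥ v := by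
          rw [add_mulVec, ← mulVec_mulVec, ← mulVec_mulVec, hv, mulVec_zero, add_zero]
      _ = v := by rw [hsplit, one_mulVec]

end Matrix

/-- Columns: `α₈` and `−θ`. -/
def a2InE8 : Matrix (Fin 8) (Fin 2) ℤ :=
  !![0, -2; 0, -3; 0, -4; 0, -6; 0, -5; 0, -4; 0, -3; 1, -2]

def a2InE8Retraction : Matrix (Fin 2) (Fin 8) ℤ :=
  !![2, -2, 0, 0, 0, 0, 0, 1; 1, -1, 0, 0, 0, 0, 0, 0]

def e6InE8 : Matrix (Fin 8) (Fin 6) ℤ :=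
  (1 : Matrix (Fin 8) (Fin 8) ℤ).submatrix id (Fin.castLE (by norm_num))

/-- Recovers `(v₇, v₈)` from the pairings `(v₇ − 2v₈, v₈)` of `v` with `α₈` and `−θ`. -/
def a2PairingSplitting : Matrix (Fin 8) (Fin 2) ℤ :=
  !![0, 0; 0, 0; 0, 0; 0, 0; 0, 0; 0, 0; 1, 2; 0, 1]

theorem a2InE8Retraction_mul : a2InE8Retraction * a2InE8 = 1 := by decide

theorem e6InE8_transpose_mul : e6InE8ᵀ * e6InE8 = 1 := by decide

theorem a2InE8_gram : a2InE8ᵀ * E8 * a2InE8 = A2 := by decide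

theorem e6InE8_gram : e6InE8ᵀ * E8 * e6InE8 = E6 := by decide

theorem e6InE8_orthogonal : (E8 * a2InE8)ᵀ * e6InE8 = 0 := by decide

theorem e6InE8_split :
    e6InE8 * e6InE8ᵀ + a2PairingSplitting * (E8 * a2InE8)ᵀ = 1 := by decide

/-- Nishiyama: there is a primitive embedding of A₂ into E₈ whose orthogonal complement is isometric to E₆. -/
theorem primitive_embedding_A2_E8 :
    ∃ ι : (Fin 2 → ℤ) →ₗ[ℤ] (Fin 8 → ℤ),
      -- ι is an embedding of the lattice (A₂) into (E₈) ...
      Function.Injective ι ∧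
      (∀ x y : Fin 2 → ℤ, ι x ⬝ᵥ (E8 *ᵥ ι y) = x ⬝ᵥ (A2 *ᵥ y)) ∧
      -- ... which is primitive (its image is saturated, i.e. the cokernel is torsion-free) ...
      (∀ (v : Fin 8 → ℤ) (k : ℤ), k ≠ 0 → k • v ∈ LinearMap.range ι → v ∈ LinearMap.range ι) ∧
      -- ... and the orthogonal complement of the image of ι, with the restricted form,
      -- is isometric to (E₆): there is an injective linear map j preserving the forms
      -- whose range is exactly the orthogonal complement of the image of ι.
      ∃ j : (Fin 6 → ℤ) →ₗ[ℤ] (Fin 8 → ℤ),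
        Function.Injective j ∧
        (∀ x y : Fin 6 → ℤ, j x ⬝ᵥ (E8 *ᵥ j y) = x ⬝ᵥ (E6 *ᵥ y)) ∧
        (∀ v : Fin 8 → ℤ, v ∈ LinearMap.range j ↔ ∀ x : Fin 2 → ℤ, v ⬝ᵥ (E8 *ᵥ ι x) = 0) := by
  refine ⟨a2InE8.mulVecLin, mulVec_injective_of_mul_eq_one a2InE8Retraction_mul,
    fun x y => ?_, fun v k hk => mem_range_mulVecLin_of_smul_mem a2InE8Retraction_mul hk,
    e6InE8.mulVecLin, mulVec_injective_of_mul_eq_one e6InE8_transpose_mul, fun x y => ?_,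
    fun v => ?_⟩
  · rw [mulVecLin_apply, mulVecLin_apply, mulVec_dotProduct_mulVec_mulVec, a2InE8_gram]
  · rw [mulVecLin_apply, mulVecLin_apply, mulVec_dotProduct_mulVec_mulVec, e6InE8_gram]
  · rw [mem_range_mulVecLin_iff_mulVec_eq_zero e6InE8_orthogonal e6InE8_split]
    exact (forall_dotProduct_mulVec_mulVec_eq_zero_iff E8 a2InE8 v).symm
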